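/- arXiv:2604.12550 — 2 statements merged into one kernel-verified Lean document; each statement's English description precedes it below -/
import Mathlib

section
/- Let Q be a finite quandle. A representation ρ : Q → GL(V) of Q over ℂ is irreducible if and only if there exist a character χ of Q and an irreducible group representation σ : G(Q) → GL(V) whose image is a finite subgroup of GL(V), such that ρ(x) = χ(x) σ(φ_Q(x)) for all x ∈ Q. -/
open scoped Quandles
/-- The inner automorphism group of a rack/quandle `Q`: the subgroup of permutations
of `Q` generated by the left translations `L_x = Rack.act' x`. -/
def QdlInn (Q : Type*) [Rack Q] : Subgroup (Equiv.Perm Q) :=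
  Subgroup.closure (Set.range (Rack.act' (R := Q)))

/-- The quandle morphism `θ : Q → Conj (Inn Q)`, `x ↦ L_x`. -/
def QdlTheta (Q : Type*) [Rack Q] : ShelfHom Q (Quandle.Conj (QdlInn Q)) where
  toFun x := ⟨Rack.act' x, Subgroup.subset_closure ⟨x, rfl⟩⟩
  map_act' := by
    intro x y
    simp only [Quandle.conj_act_eq_conj]
    exact Subtype.ext (Rack.ad_conj x y)

/-- The induced group morphism `θ_{G(Q)} : G(Q) → Inn(Q)`. -/
def QdlThetaG (Q : Type*) [Rack Q] : Rack.EnvelGroup Q →* QdlInn Q :=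
  Rack.toEnvelGroup.map (QdlTheta Q)

/-- `Z₀`, the kernel of `θ_{G(Q)}`. -/
def QdlZ0 (Q : Type*) [Rack Q] : Subgroup (Rack.EnvelGroup Q) :=
  (QdlThetaG Q).ker

section Reps

variable {Q : Type*} {V : Type*} [AddCommGroup V] [Module ℂ V]

/-- `ρ : Q → GL(V)` is a quandle (rack) representation: `ρ(x ◃ y) = ρ(x) ρ(y) ρ(x)⁻¹`. -/
def IsQdlRep [Shelf Q] (ρ : Q → (V →ₗ[ℂ] V)ˣ) : Prop :=
  ∀ x y : Q, ρ (x ◃ y) = ρ x * ρ y * (ρ x)⁻¹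

/-- A family `ρ : Q → GL(V)` is irreducible if the only subspaces invariant
under all `ρ x` are `0` and `V`. -/
def QdlIrred (ρ : Q → (V →ₗ[ℂ] V)ˣ) : Prop :=
  ∀ W : Submodule ℂ V, (∀ x : Q, ∀ v ∈ W, (ρ x : V →ₗ[ℂ] V) v ∈ W) → W = ⊥ ∨ W = ⊤

/-- A group representation `σ : G →* GL(V)` is irreducible if the only subspaces
invariant under all `σ g` are `0` and `V`. -/
def GrpIrred {G : Type*} [Group G] (σ : G →* (V →ₗ[ℂ] V)ˣ) : Prop :=
  ∀ W : Submodule ℂ V, (∀ g : G, ∀ v ∈ W, (σ g : V →ₗ[ℂ] V) v ∈ W) → W = ⊥ ∨ W = ⊤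

end Reps

/-- A character of a quandle: a map `χ : Q → ℂˣ` with `χ(x ◃ y) = χ(y)`. -/
def QdlChar {Q : Type*} [Shelf Q] (χ : Q → ℂˣ) : Prop :=
  ∀ x y : Q, χ (x ◃ y) = χ y

/-!
A representation `ρ` of `Q` extends to a representation `ρ̃` of `G(Q)`. As `G(Q)` is generated by
the finite conjugation-invariant set `φ_Q(Q)`, its centre `Z` has finite index `n`. If `ρ` is
irreducible, then `V` has countable dimension and Dixmier's form of Schur's lemma makes `ρ̃` scalar
on `Z`, say equal to `ζ`. Composing `ζ` with the transfer `g ↦ gⁿ : G(Q) → Z` gives a character of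
`G(Q)`; characters of `G(Q)` are functions on `Q` invariant under `▷`, so this one has an `n`-th
root `ψ`. Then `σ = ψ⁻¹ ρ̃` takes `n`-th roots of unity as values on `Z`, so it has finite image,
and `ρ(x) = ψ(φ_Q x) σ(φ_Q x)`. Conversely, a subspace invariant under all `ρ(x)` is invariant
under all `σ(φ_Q x)`, hence, `σ` having finite image, under their inverses and so under `σ(G(Q))`.
-/

namespace Subgroup

variable {G : Type*} [Group G]

theorem finiteIndex_center_of_closure_eq_top {S : Set G} (hS : closure S = ⊤) (hSfin : S.Finite)
    (hconj : ∀ g, ∀ s ∈ S, g * s * g⁻¹ ∈ S) : (center G).FiniteIndex := by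
  have : Finite S := hSfin.to_subtype
  rw [center_eq_infi' hS]
  refine finiteIndex_iInf fun s => ⟨?_⟩
  have horbit : MulAction.orbit (ConjAct G) (s : G) ⊆ S := by
    rintro _ ⟨g, rfl⟩
    exact hconj _ _ s.2
  have hindex := (MulAction.stabilizer (ConjAct G) (s : G)).index_comap_of_surjective
    (f := ConjAct.toConjAct.toMonoidHom) ConjAct.toConjAct.surjective
  rw [(congrArg index (centralizer_eq_comap_stabilizer (s : G))).trans hindex,
    MulAction.index_stabilizer]
  exact (Set.ncard_pos (hSfin.subset horbit)).2 ⟨_, MulAction.mem_orbit_self _⟩ |>.ne'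

end Subgroup

theorem MonoidHom.finite_range_of_finite_map {G M : Type*} [Group G] [Group M] (f : G →* M)
    (K : Subgroup G) [K.FiniteIndex] [Finite (K.map f)] : Finite f.range := by
  have : (K.map f.rangeRestrict).FiniteIndex :=
    ⟨ne_zero_of_dvd_ne_zero Subgroup.FiniteIndex.index_ne_zero
      (K.index_map_dvd f.rangeRestrict_surjective)⟩
  have : Finite (K.map f.rangeRestrict) := by
    have e := (K.map f.rangeRestrict).equivMapOfInjective _ f.range.subtype_injective
    rw [Subgroup.map_map, MonoidHom.subtype_comp_rangeRestrict] at e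
    exact Finite.of_equiv _ e.symm.toEquiv
  exact (Subgroup.finite_iff_finite_and_finiteIndex (K.map f.rangeRestrict)).2 ⟨‹_›, ‹_›⟩

theorem MonoidHom.exists_comp_eq_of_range_le {G H M : Type*} [Group G] [Group H] [Group M]
    (f : G →* M) {j : H →* M} (hj : Function.Injective j) (h : f.range ≤ j.range) :
    ∃ g : G →* H, j.comp g = f :=
  ⟨(MonoidHom.ofInjective hj).symm.toMonoidHom.comp (f.codRestrict j.range fun x => h ⟨x, rfl⟩),
    by ext x; simp⟩

namespace Rack

variable {Q : Type*} [Rack Q]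

local notation "η" => toEnvelGroup Q

theorem closure_range_toEnvelGroup : Subgroup.closure (Set.range (toEnvelGroup Q)) = ⊤ := by
  refine (Subgroup.eq_top_iff' _).2 fun g => ?_
  induction g using Quotient.inductionOn with
  | h a =>
    induction a with
    | unit => exact one_mem _
    | incl x => exact Subgroup.subset_closure ⟨x, rfl⟩
    | mul a b iha ihb => exact mul_mem iha ihb
    | inv a iha => exact inv_mem iha

theorem toEnvelGroup_act (x y : Q) : η (x ◃ y) = η x * η y * (η x)⁻¹ :=
  (toEnvelGroup Q).map_act

theorem toEnvelGroup_invAct (x y : Q) : η (x ◃⁻¹ y) = (η x)⁻¹ * η y * η x := by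
  conv_rhs => rw [← act_invAct_eq x y, toEnvelGroup_act]
  group

theorem conj_toEnvelGroup_mem_range (g : EnvelGroup Q) (y : Q) :
    g * η y * g⁻¹ ∈ Set.range (toEnvelGroup Q) := by
  have hg : g ∈ Subgroup.closure (Set.range (toEnvelGroup Q)) :=
    closure_range_toEnvelGroup (Q := Q) ▸ Subgroup.mem_top g
  induction hg using Subgroup.closure_induction'' generalizing y with
  | mem _ hx =>
    obtain ⟨x, rfl⟩ := hx
    exact ⟨x ◃ y, toEnvelGroup_act x y⟩
  | inv_mem _ hx =>
    obtain ⟨x, rfl⟩ := hx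
    exact ⟨x ◃⁻¹ y, by rw [toEnvelGroup_invAct, inv_inv]⟩
  | one => exact ⟨y, by group⟩
  | mul a b _ _ ha hb =>
    obtain ⟨z, hz⟩ := hb y
    obtain ⟨w, hw⟩ := ha z
    exact ⟨w, by rw [hw, hz]; group⟩

instance EnvelGroup.finiteIndex_center [Finite Q] : (Subgroup.center (EnvelGroup Q)).FiniteIndex :=
  Subgroup.finiteIndex_center_of_closure_eq_top closure_range_toEnvelGroup (Set.finite_range _)
    fun g _ ⟨y, hy⟩ => hy ▸ conj_toEnvelGroup_mem_range g y

theorem EnvelGroup.hom_ext {G : Type*} [Group G] {f g : EnvelGroup Q →* G}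
    (h : ∀ x, f (η x) = g (η x)) : f = g :=
  MonoidHom.eq_of_eqOn_dense closure_range_toEnvelGroup fun _ ⟨x, hx⟩ => hx ▸ h x

theorem EnvelGroup.map_toEnvelGroup_act {A : Type*} [CommGroup A] (ψ : EnvelGroup Q →* A)
    (x y : Q) : ψ (η (x ◃ y)) = ψ (η y) := by
  rw [toEnvelGroup_act, map_mul, map_mul, map_inv, mul_inv_cancel_comm]

theorem EnvelGroup.exists_lift_of_surjective {A B : Type*} [CommGroup A] [CommGroup B]
    {p : B →* A} (hp : Function.Surjective p) (f : EnvelGroup Q →* A) :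
    ∃ f' : EnvelGroup Q →* B, p.comp f' = f := by
  -- a homomorphism to an abelian group is a function on `Q` invariant under `◃`: lift it pointwise
  let s := Function.surjInv hp
  let f₀ : Q →◃ Quandle.Conj B :=
    { toFun := fun x => s (f (η x))
      map_act' := fun {x y} => by
        rw [Quandle.conj_act_eq_conj, mul_inv_cancel_comm, map_toEnvelGroup_act] }
  exact ⟨toEnvelGroup.map f₀, hom_ext fun x => Function.surjInv_eq hp (f (η x))⟩

end Rack

section Schur

open Polynomial Cardinal

variable {K V ι : Type*} [Field K] [AddCommGroup V] [Module K V]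

def IsIrreducibleFamily (T : ι → Module.End K V) : Prop :=
  ∀ W : Submodule K V, (∀ i, ∀ v ∈ W, T i v ∈ W) → W = ⊥ ∨ W = ⊤

namespace IsIrreducibleFamily

variable {T : ι → Module.End K V}

theorem eq_zero_or_bijective (hT : IsIrreducibleFamily T) {f : Module.End K V}
    (hf : ∀ i, Commute (T i) f) : f = 0 ∨ Function.Bijective f := by
  have hker := hT (LinearMap.ker f) fun i v hv => by
    rw [LinearMap.mem_ker] at hv ⊢
    rw [← Module.End.mul_apply, ← (hf i).eq, Module.End.mul_apply, hv, map_zero]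
  have hrange := hT (LinearMap.range f) fun i _ ⟨w, hw⟩ =>
    ⟨T i w, by rw [← hw, ← Module.End.mul_apply, ← (hf i).eq, Module.End.mul_apply]⟩
  rw [LinearMap.ker_eq_bot, LinearMap.ker_eq_top, LinearMap.range_eq_bot,
    LinearMap.range_eq_top] at *
  tauto

theorem rank_le_aleph0 [Countable ι] (hT : IsIrreducibleFamily T) : Module.rank K V ≤ ℵ₀ := by
  rcases subsingleton_or_nontrivial V with hV | ⟨v, w, hvw⟩
  · simp [rank_subsingleton']
  obtain ⟨v₀, hv₀⟩ : ∃ v₀ : V, v₀ ≠ 0 := ⟨v - w, sub_ne_zero.2 hvw⟩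
  let S : Set V := Set.range fun l : List ι => (l.map T).prod v₀
  have hS : Submodule.span K S = ⊤ := by
    refine (hT _ fun i v hv => ?_).resolve_left fun h => hv₀ ?_
    · induction hv using Submodule.span_induction with
      | mem w hw =>
        obtain ⟨l, rfl⟩ := hw
        exact Submodule.subset_span ⟨i :: l, by simp [Module.End.mul_apply]⟩
      | zero => simp
      | add a b _ _ ha hb => rw [map_add]; exact add_mem ha hb
      | smul c a _ ha => rw [map_smul]; exact Submodule.smul_mem _ c ha
    · rw [← Submodule.mem_bot K, ← h]
      exact Submodule.subset_span ⟨[], by simp⟩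
  calc Module.rank K V = Module.rank K (⊤ : Submodule K V) := (rank_top K V).symm
    _ ≤ #S := hS ▸ rank_span_le S
    _ ≤ ℵ₀ := (Set.countable_range _).le_aleph0

end IsIrreducibleFamily

theorem linearIndependent_of_sub_algebraMap_apply_eq {u : Module.End K V}
    (hu : ∀ p : K[X], p ≠ 0 → Function.Injective (aeval u p)) {v : V} (hv : v ≠ 0)
    {w : K → V} (hw : ∀ c, (u - algebraMap K _ c) (w c) = v) : LinearIndependent K w := by
  classical
  rw [linearIndependent_iff']
  intro s g hsum i hi
  -- applying `∏_{j ∈ s} (u - j)` to the relation gives `p(u) v = 0` for the polynomial `p` below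
  let p : K[X] := ∑ k ∈ s, C (g k) * Lagrange.nodal (s.erase k) id
  have hpv : aeval u p v = 0 := by
    have hnodal : ∀ k ∈ s, aeval u (Lagrange.nodal s id) (w k)
        = aeval u (Lagrange.nodal (s.erase k) id) v := fun k hk => by
      rw [Lagrange.nodal_eq_mul_nodal_erase hk, mul_comm, map_mul, Module.End.mul_apply]
      simpa using congrArg (aeval u (Lagrange.nodal (s.erase k) id)) (hw k)
    calc aeval u p v = ∑ k ∈ s, g k • aeval u (Lagrange.nodal (s.erase k) id) v := by
          simp [p, Module.End.mul_apply, Module.algebraMap_end_apply]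
      _ = aeval u (Lagrange.nodal s id) (∑ k ∈ s, g k • w k) := by
          simp only [map_sum, map_smul]
          exact Finset.sum_congr rfl fun k hk => by rw [hnodal k hk]
      _ = 0 := by rw [hsum, map_zero]
  have hp : p = 0 := by
    by_contra hp
    exact hv (hu p hp (hpv.trans (map_zero _).symm))
  have heval : eval i p = g i * eval i (Lagrange.nodal (s.erase i) id) := by
    rw [eval_finsetSum, Finset.sum_eq_single_of_mem i hi fun k hk hki => ?_]
    · simp
    · simp only [eval_mul, eval_C]
      exact mul_eq_zero_of_right _
        (Lagrange.eval_nodal_at_node (v := id) (Finset.mem_erase.2 ⟨hki.symm, hi⟩))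
  have hnode : eval i (Lagrange.nodal (s.erase i) id) ≠ 0 :=
    Lagrange.eval_nodal_not_at_node fun j hj => (Finset.ne_of_mem_erase hj).symm
  simpa [hp, hnode] using heval

variable [IsAlgClosed K] {T : ι → Module.End K V}

theorem isUnit_aeval_of_spectrum_eq_empty {u : Module.End K V} (hu : spectrum K u = ∅)
    {p : K[X]} (hp : p ≠ 0) : IsUnit (aeval u p) := by
  rcases le_or_gt p.degree 0 with hdeg | hdeg
  · rw [eq_C_of_degree_le_zero hdeg, aeval_C]
    refine (Ne.isUnit fun h => hp ?_).map _
    rw [eq_C_of_degree_le_zero hdeg, h, C_0]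
  · rw [← spectrum.zero_notMem_iff K, spectrum.map_polynomial_aeval_of_degree_pos u p hdeg, hu,
      Set.image_empty]
    exact Set.notMem_empty 0

/-- Schur's lemma in Dixmier's form: the `(u - c)⁻¹ v` would give `#K` independent vectors. -/
theorem IsIrreducibleFamily.exists_eq_algebraMap_of_commute [Countable ι] (hK : ℵ₀ < #K)
    (hT : IsIrreducibleFamily T) {u : Module.End K V} (hu : ∀ i, Commute (T i) u) :
    ∃ c : K, u = algebraMap K _ c := by
  rcases subsingleton_or_nontrivial V with hV | ⟨v, v', hvv'⟩
  · exact ⟨0, Subsingleton.elim _ _⟩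
  by_contra! hne
  have hbij : ∀ c, Function.Bijective ⇑(u - algebraMap K (Module.End K V) c) := fun c =>
    (hT.eq_zero_or_bijective fun i => (hu i).sub_right (Algebra.commutes c (T i)).symm).resolve_left
      (sub_ne_zero.2 (hne c))
  have hspec : spectrum K u = ∅ := Set.eq_empty_of_forall_notMem fun c hc =>
    spectrum.mem_iff.1 hc (by rw [← neg_sub, IsUnit.neg_iff, Module.End.isUnit_iff]; exact hbij c)
  have hw := fun c => Function.surjInv_eq (hbij c).2 (v - v')
  have hli := linearIndependent_of_sub_algebraMap_apply_eq
    (fun p hp => (Module.End.isUnit_iff _).1 (isUnit_aeval_of_spectrum_eq_empty hspec hp) |>.1)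
    (sub_ne_zero.2 hvv') hw
  have hrank := hli.cardinal_lift_le_rank.trans (lift_le_aleph0.2 hT.rank_le_aleph0)
  exact (aleph0_lt_lift.2 hK).not_ge hrank

end Schur

theorem Submodule.apply_mem_of_finite_range {K V G : Type*} [Field K] [AddCommGroup V]
    [Module K V] [Group G] (σ : G →* (V →ₗ[K] V)ˣ) [Finite σ.range] {S : Set G}
    (hS : Subgroup.closure S = ⊤) (W : Submodule K V)
    (hW : ∀ s ∈ S, ∀ v ∈ W, (σ s : V →ₗ[K] V) v ∈ W) (g : G) :
    ∀ v ∈ W, (σ g : V →ₗ[K] V) v ∈ W := by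
  let M : Submonoid G :=
    { carrier := {g | ∀ v ∈ W, (σ g : V →ₗ[K] V) v ∈ W}
      mul_mem' := fun ha hb v hv => by
        rw [map_mul, Units.val_mul, Module.End.mul_apply]
        exact ha _ (hb v hv)
      one_mem' := fun v hv => by simpa using hv }
  -- in the finite group `σ.range` the inverse of an element is one of its powers
  have hinv : ∀ g ∈ M, g⁻¹ ∈ M := fun g hg => by
    obtain ⟨k, hk⟩ : (σ.rangeRestrict g)⁻¹ ∈ Submonoid.powers (σ.rangeRestrict g) := by
      rw [← SetLike.mem_coe, powers_eq_zpowers]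
      exact inv_mem (Subgroup.mem_zpowers _)
    have hσ : σ (g ^ k) = σ g⁻¹ := by simpa using congrArg Subtype.val hk
    have hk : ∀ v ∈ W, (σ (g ^ k) : V →ₗ[K] V) v ∈ W := M.pow_mem hg k
    rwa [hσ] at hk
  have hg : g ∈ Subgroup.closure S := hS ▸ Subgroup.mem_top g
  induction hg using Subgroup.closure_induction with
  | mem s hs => exact hW s hs
  | one => exact M.one_mem
  | mul a b _ _ ha hb => exact M.mul_mem ha hb
  | inv a _ ha => exact hinv a ha

theorem IsAlgClosed.powMonoidHom_units_surjective {k : Type*} [Field k] [IsAlgClosed k] {n : ℕ}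
    (hn : n ≠ 0) : Function.Surjective (powMonoidHom n : kˣ →* kˣ) := fun c => by
  obtain ⟨d, hd⟩ := IsAlgClosed.exists_pow_nat_eq (c : k) (Nat.pos_of_ne_zero hn)
  have hd0 : d ≠ 0 := by
    rintro rfl
    exact c.ne_zero (by rw [← hd, zero_pow hn])
  exact ⟨Units.mk0 d hd0, Units.ext (by simpa using hd)⟩

section Twist

variable {K V G : Type*} [Field K] [AddCommGroup V] [Module K V] [Group G]

variable (K V) in
abbrev scalarUnits : Kˣ →* (Module.End K V)ˣ :=
  Units.map (algebraMap K (Module.End K V) : K →* Module.End K V)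

theorem scalarUnits_injective [Nontrivial V] : Function.Injective (scalarUnits K V) :=
  Units.map_injective (algebraMap K (Module.End K V)).injective

def scalarTwist (ψ : G →* Kˣ) (σ : G →* (Module.End K V)ˣ) : G →* (Module.End K V)ˣ where
  toFun g := ψ g • σ g
  map_one' := by simp
  map_mul' a b := Units.ext <| by
    simp only [map_mul, Units.val_mul, Units.val_smul, Units.smul_def, smul_mul_smul_comm]

@[simp]
theorem coe_scalarTwist_apply (ψ : G →* Kˣ) (σ : G →* (Module.End K V)ˣ) (g : G) :
    (scalarTwist ψ σ g : Module.End K V) = (ψ g : K) • (σ g : Module.End K V) :=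
  rfl

theorem finite_range_scalarTwist [(Subgroup.center G).FiniteIndex] (σ : G →* (Module.End K V)ˣ)
    (ζ : Subgroup.center G →* Kˣ)
    (hζ : (scalarUnits K V).comp ζ = σ.comp (Subgroup.center G).subtype)
    (ψ : G →* Kˣ) (hψ : (powMonoidHom (Subgroup.center G).index).comp ψ
      = ζ.comp (MonoidHom.transferCenterPow G)) :
    Finite (scalarTwist ψ⁻¹ σ).range := by
  set n := (Subgroup.center G).index
  have : NeZero n := ⟨Subgroup.FiniteIndex.index_ne_zero⟩
  let ω : Subgroup.center G →* Kˣ := (ψ.comp (Subgroup.center G).subtype)⁻¹ * ζ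
  -- `ω z ^ n = ζ (z ^ n) / ζ (transfer z)`, and the transfer of a central `z` is `z ^ n`
  have hω : ω.range ≤ rootsOfUnity n K := by
    rintro _ ⟨z, rfl⟩
    have hz : MonoidHom.transferCenterPow G z = z ^ n := Subtype.ext (by simp [n])
    have := DFunLike.congr_fun hψ (z : G)
    simp only [MonoidHom.comp_apply, powMonoidHom_apply, hz, map_pow] at this
    simp [ω, mem_rootsOfUnity, mul_pow, this]
  have hcomp : (scalarTwist ψ⁻¹ σ).comp (Subgroup.center G).subtype = (scalarUnits K V).comp ω := by
    ext z : 2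
    have hσz := congrArg Units.val (DFunLike.congr_fun hζ z)
    simp only [MonoidHom.comp_apply, Subgroup.coe_subtype] at hσz
    simp [ω, ← hσz, Algebra.smul_def]
  have : Finite ((Subgroup.center G).map (scalarTwist ψ⁻¹ σ)) := by
    rw [← Subgroup.range_subtype (Subgroup.center G), ← MonoidHom.range_comp, hcomp,
      MonoidHom.range_comp]
    have : Finite ω.range := Finite.of_injective _ (Subgroup.inclusion_injective hω)
    exact Finite.of_surjective _ ((scalarUnits K V).subgroupMap_surjective ω.range)
  exact (scalarTwist ψ⁻¹ σ).finite_range_of_finite_map (Subgroup.center G)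

end Twist

section QuandleRepresentation

variable {Q V : Type*} [AddCommGroup V] [Module ℂ V] {ρ : Q → (V →ₗ[ℂ] V)ˣ}

local notation "η" => Rack.toEnvelGroup Q

def IsQdlRep.envelHom [Rack Q] (hρ : IsQdlRep ρ) : Rack.EnvelGroup Q →* (V →ₗ[ℂ] V)ˣ :=
  Rack.toEnvelGroup.map ⟨ρ, fun {x y} => by rw [Quandle.conj_act_eq_conj]; exact hρ x y⟩

@[simp]
theorem IsQdlRep.envelHom_toEnvelGroup [Rack Q] (hρ : IsQdlRep ρ) (x : Q) :
    hρ.envelHom (η x) = ρ x :=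
  rfl

theorem IsQdlRep.exists_comp_eq_envelHom_center [Rack Q] [Finite Q] [Nontrivial V]
    (hρ : IsQdlRep ρ) (hirr : QdlIrred ρ) :
    ∃ ζ : Subgroup.center (Rack.EnvelGroup Q) →* ℂˣ,
      (scalarUnits ℂ V).comp ζ = hρ.envelHom.comp (Subgroup.center _).subtype := by
  refine MonoidHom.exists_comp_eq_of_range_le _ scalarUnits_injective ?_
  rintro _ ⟨z, rfl⟩
  have hK : Cardinal.aleph0 < Cardinal.mk ℂ := Cardinal.mk_complex ▸ Cardinal.aleph0_lt_continuum
  obtain ⟨c, hc⟩ := IsIrreducibleFamily.exists_eq_algebraMap_of_commute hK hirr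
    (u := (hρ.envelHom z : Module.End ℂ V)) fun x =>
      Commute.map (Subgroup.mem_center_iff.1 z.2 (η x)) ((Units.coeHom _).comp hρ.envelHom)
  have hc0 : c ≠ 0 := by
    rintro rfl
    exact (hρ.envelHom z).ne_zero (by rwa [map_zero] at hc)
  exact ⟨Units.mk0 c hc0, Units.ext hc.symm⟩

theorem IsQdlRep.exists_of_qdlIrred [Rack Q] [Finite Q] (hρ : IsQdlRep ρ) (hirr : QdlIrred ρ) :
    ∃ (χ : Q → ℂˣ) (σ : Rack.EnvelGroup Q →* (V →ₗ[ℂ] V)ˣ),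
      QdlChar χ ∧ GrpIrred σ ∧ Finite σ.range ∧
        ∀ x : Q, (ρ x : V →ₗ[ℂ] V) = (χ x : ℂ) • (σ (η x) : V →ₗ[ℂ] V) := by
  rcases subsingleton_or_nontrivial V with hV | hV
  · exact ⟨1, 1, fun _ _ => rfl, fun W _ => .inl (Subsingleton.elim W ⊥), inferInstance,
      fun _ => Subsingleton.elim _ _⟩
  obtain ⟨ζ, hζ⟩ := hρ.exists_comp_eq_envelHom_center hirr
  obtain ⟨ψ, hψ⟩ := Rack.EnvelGroup.exists_lift_of_surjective
    (IsAlgClosed.powMonoidHom_units_surjective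
      (Subgroup.FiniteIndex.index_ne_zero (H := Subgroup.center (Rack.EnvelGroup Q))))
    (ζ.comp (MonoidHom.transferCenterPow _))
  have hρσ : ∀ x, (ρ x : V →ₗ[ℂ] V)
      = (ψ (η x) : ℂ) • (scalarTwist ψ⁻¹ hρ.envelHom (η x) : V →ₗ[ℂ] V) := fun x => by
    simp [smul_smul]
  refine ⟨fun x => ψ (η x), scalarTwist ψ⁻¹ hρ.envelHom, Rack.EnvelGroup.map_toEnvelGroup_act ψ,
    fun W hW => hirr W fun x v hv => ?_, finite_range_scalarTwist _ ζ hζ ψ hψ, hρσ⟩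
  rw [hρσ]
  exact W.smul_mem _ (hW _ v hv)

theorem qdlIrred_of_eq_smul [Rack Q] {χ : Q → ℂˣ} {σ : Rack.EnvelGroup Q →* (V →ₗ[ℂ] V)ˣ}
    (hσ : GrpIrred σ) [Finite σ.range]
    (hρσ : ∀ x : Q, (ρ x : V →ₗ[ℂ] V) = (χ x : ℂ) • (σ (η x) : V →ₗ[ℂ] V)) : QdlIrred ρ := by
  refine fun W hW => hσ W (W.apply_mem_of_finite_range σ Rack.closure_range_toEnvelGroup ?_)
  rintro _ ⟨x, rfl⟩ v hv
  have hσx : (σ (η x) : V →ₗ[ℂ] V) = (χ x : ℂ)⁻¹ • (ρ x : V →ₗ[ℂ] V) := by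
    rw [hρσ, smul_smul, inv_mul_cancel₀ (χ x).ne_zero, one_smul]
  rw [hσx]
  exact W.smul_mem _ (hW x v hv)

end QuandleRepresentation

/-- a representation of a finite quandle `Q` is irreducible iff it is the
product of a character of `Q` and an irreducible representation of `G(Q)` with finite image. -/
theorem stmt16 (Q : Type*) [Quandle Q] [Finite Q]
    (V : Type*) [AddCommGroup V] [Module ℂ V]
    (ρ : Q → (V →ₗ[ℂ] V)ˣ) (hρ : IsQdlRep ρ) :
    QdlIrred ρ ↔
      ∃ (χ : Q → ℂˣ) (σ : Rack.EnvelGroup Q →* (V →ₗ[ℂ] V)ˣ),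
        QdlChar χ ∧ GrpIrred σ ∧ Finite σ.range ∧
        ∀ x : Q, (ρ x : V →ₗ[ℂ] V) = (χ x : ℂ) • (σ (Rack.toEnvelGroup Q x) : V →ₗ[ℂ] V) :=
  ⟨hρ.exists_of_qdlIrred, fun ⟨_, _, _, hσ, _, hρσ⟩ => qdlIrred_of_eq_smul hσ hρσ⟩
end

section
/- Let Q be a finite quandle such that every ℂˣ-valued 2-cocycle on Inn(Q) (trivial action) is a 2-coboundary. Then Z₀ = ker θ_{G(Q)} is torsion-free: its only element of finite order is the identity. -/
open scoped Quandles
/-!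
In `G(Q)` one has `g x g⁻¹ = θ_{G(Q)}(g)(x)` for `x ∈ Q`, so `Z₀` is central and
`1 → Z₀ → G(Q) → Inn(Q) → 1` is a central extension. A character `λ` of the abelian
group `Z₀` pushes the class of this extension to a `ℂˣ`-valued 2-cocycle on `Inn(Q)`; as that
cocycle is a coboundary, `λ` extends to a character of `G(Q)`. Characters of `G(Q)` factor through
its abelianization, which is free abelian on the orbits of `Q`, so they kill every element of
finite order. As characters of `Z₀` separate its points (`ℂˣ` is divisible), a torsion element of
`Z₀` is trivial.
-/

section CentralExtension

variable {G H A : Type*} [Group G] [Group H] [CommGroup A] {π : G →* H} {s : H → G}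

abbrev Subgroup.commGroupOfLeCenter {K : Subgroup G} (hK : K ≤ Subgroup.center G) :
    CommGroup K :=
  { K.toGroup with mul_comm := fun a b => Subtype.ext (Subgroup.mem_center_iff.mp (hK b.2) a) }

theorem MonoidHom.mul_mul_inv_section_mem_ker (hs : ∀ h, π (s h) = h) (h k : H) :
    s h * s k * (s (h * k))⁻¹ ∈ π.ker := by
  rw [MonoidHom.mem_ker, map_mul, map_mul, map_inv, hs, hs, hs, mul_inv_cancel]

theorem MonoidHom.mul_inv_section_mem_ker (hs : ∀ h, π (s h) = h) (g : G) :
    g * (s (π g))⁻¹ ∈ π.ker := by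
  rw [MonoidHom.mem_ker, map_mul, map_inv, hs, mul_inv_cancel]

theorem section_factor_set_cocycle {g h k : H}
    (hc : s h * s k * (s (h * k))⁻¹ ∈ Subgroup.center G) :
    s g * s h * (s (g * h))⁻¹ * (s (g * h) * s k * (s (g * h * k))⁻¹) =
      s h * s k * (s (h * k))⁻¹ * (s g * s (h * k) * (s (g * (h * k)))⁻¹) := by
  have hcomm := Subgroup.mem_center_iff.mp hc (s g)
  rw [mul_assoc g h k]
  calc _ = s g * (s h * s k * (s (h * k))⁻¹) * s (h * k) * (s (g * (h * k)))⁻¹ := by group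
    _ = _ := by rw [hcomm]; group

theorem mul_inv_section_mul {g g' : G} (hc : g' * (s (π g'))⁻¹ ∈ Subgroup.center G) :
    g * g' * (s (π (g * g')))⁻¹ =
      g * (s (π g))⁻¹ * (g' * (s (π g'))⁻¹) * (s (π g) * s (π g') * (s (π g * π g'))⁻¹) := by
  have hcomm := Subgroup.mem_center_iff.mp hc (s (π g))
  rw [map_mul]
  calc _ = g * (s (π g))⁻¹ * (s (π g) * (g' * (s (π g'))⁻¹)) * s (π g') * (s (π g * π g'))⁻¹ := by
        group
    _ = _ := by rw [hcomm]; group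

theorem MonoidHom.exists_extension_of_ker_le_center (π : G →* H) (hπ : Function.Surjective π)
    (hcen : π.ker ≤ Subgroup.center G)
    (hcob : ∀ α : H → H → A, (∀ g h k : H, α g h * α (g * h) k = α h k * α g (h * k)) →
      ∃ β : H → A, ∀ g h : H, α g h = β g * β h * (β (g * h))⁻¹)
    (χ : π.ker →* A) : ∃ φ : G →* A, ∀ z : π.ker, φ z = χ z := by
  let s := Function.surjInv hπ
  have hs : ∀ h, π (s h) = h := Function.surjInv_eq hπ
  let f (h k : H) : π.ker := ⟨s h * s k * (s (h * k))⁻¹, mul_mul_inv_section_mem_ker hs h k⟩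
  let d (g : G) : π.ker := ⟨g * (s (π g))⁻¹, mul_inv_section_mem_ker hs g⟩
  obtain ⟨β, hβ⟩ := hcob (fun h k => χ (f h k)) fun g h k => by
    simp only [← map_mul]
    exact congrArg χ (Subtype.ext (section_factor_set_cocycle (hcen (f h k).2)))
  have hd (g g' : G) : d (g * g') = d g * d g' * f (π g) (π g') :=
    Subtype.ext (mul_inv_section_mul (hcen (d g').2))
  let φ : G →* A := MonoidHom.mk' (fun g => χ (d g) * β (π g)) fun g g' => by
    simp only [hd, map_mul, hβ]
    group
    ac_rfl
  refine ⟨φ, fun z => ?_⟩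
  have hdz : d z = z * d 1 := Subtype.ext (by simp [d, MonoidHom.mem_ker.mp z.2])
  calc φ z = χ z * (χ (d 1) * β (π 1)) := by
        simp only [φ, MonoidHom.mk'_apply, hdz, map_mul, MonoidHom.mem_ker.mp z.2, map_one, mul_assoc]
    _ = χ z * φ 1 := rfl
    _ = χ z := by rw [map_one, mul_one]

end CentralExtension

noncomputable def AddCircle.ratExp : AddCircle (1 : ℚ) →+ Additive Circle :=
  QuotientAddGroup.lift _
    (Circle.expHom.comp ((AddMonoidHom.mulLeft (2 * Real.pi)).comp (Rat.castHom ℝ).toAddMonoidHom))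
    (by
      rintro _ ⟨n, rfl⟩
      change Additive.ofMul (Circle.exp (2 * Real.pi * ((n • (1 : ℚ) : ℚ) : ℝ))) = 0
      rw [zsmul_one, Rat.cast_intCast, Circle.exp_two_pi_mul_int]
      rfl)

theorem AddCircle.ratExp_injective : Function.Injective AddCircle.ratExp := by
  refine (injective_iff_map_eq_zero _).mpr fun x hx => ?_
  induction x using QuotientAddGroup.induction_on with
  | _ q =>
  obtain ⟨n, hn⟩ := Circle.exp_eq_one.mp (congrArg Additive.toMul hx)
  refine (AddCircle.coe_eq_zero_iff 1).mpr ⟨n, ?_⟩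
  have hn : 2 * Real.pi * q = n * (2 * Real.pi) := hn
  have : (q : ℝ) = n := by nlinarith [Real.pi_pos]
  simpa using (by exact_mod_cast this.symm : (n : ℚ) = q)

theorem exists_monoidHom_units_complex_apply_ne_one {A : Type*} [CommGroup A] {a : A}
    (ha : a ≠ 1) : ∃ χ : A →* ℂˣ, χ a ≠ 1 := by
  obtain ⟨c, hc⟩ := CharacterModule.exists_character_apply_ne_zero_of_ne_zero
    (show Additive.ofMul a ≠ 0 from ha)
  refine ⟨Circle.toUnits.comp (MonoidHom.toAdditive.symm (AddCircle.ratExp.comp c)), fun h => hc ?_⟩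
  apply AddCircle.ratExp_injective
  rw [map_zero]
  exact congrArg Additive.ofMul (Circle.ext (Units.ext_iff.mp h))

instance FreeAbelianGroup.isAddTorsionFree (α : Type*) : IsAddTorsionFree (FreeAbelianGroup α) :=
  (FreeAbelianGroup.equivFinsupp α).injective.isAddTorsionFree
    (FreeAbelianGroup.equivFinsupp α).toAddMonoidHom

namespace Rack

-- `Quot` passes to the equivalence closure, so this is the set of `Inn(R)`-orbits.
def Orbits (R : Type*) [Rack R] : Type _ := Quot fun a b : R => ∃ x : R, x ◃ a = b

variable {R : Type*} [Rack R]

theorem Orbits.mk_act (x y : R) : (Quot.mk _ (x ◃ y) : Orbits R) = Quot.mk _ y :=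
  (Quot.sound ⟨x, rfl⟩).symm

namespace EnvelGroup

theorem toEnvelGroup_act (x y : R) :
    (toEnvelGroup R (x ◃ y) : EnvelGroup R) =
      toEnvelGroup R x * toEnvelGroup R y * (toEnvelGroup R x)⁻¹ :=
  (toEnvelGroup R).map_act

theorem closure_range_toEnvelGroup :
    Subgroup.closure (Set.range fun x : R => (toEnvelGroup R x : EnvelGroup R)) = ⊤ := by
  rw [eq_top_iff]
  rintro g -
  induction g using Quotient.inductionOn with
  | h a =>
    induction a with
    | unit => exact one_mem _
    | incl x => exact Subgroup.subset_closure ⟨x, rfl⟩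
    | mul a b iha ihb => exact mul_mem iha ihb
    | inv a iha => exact inv_mem iha

theorem hom_ext_s17 {G : Type*} [Group G] {φ ψ : EnvelGroup R →* G}
    (h : ∀ x : R, φ (toEnvelGroup R x) = ψ (toEnvelGroup R x)) : φ = ψ :=
  toEnvelGroup.map.symm.injective (ShelfHom.ext (funext h))

theorem mul_toEnvelGroup_mul_inv (g : EnvelGroup R) (x : R) :
    g * toEnvelGroup R x * g⁻¹ = toEnvelGroup R (envelAction g x) := by
  have hg : g ∈ Subgroup.closure (Set.range fun x : R => (toEnvelGroup R x : EnvelGroup R)) := by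
    rw [closure_range_toEnvelGroup]; trivial
  induction hg using Subgroup.closure_induction generalizing x with
  | mem _ hg =>
    obtain ⟨y, rfl⟩ := hg
    exact (toEnvelGroup_act y x).symm
  | one => simp
  | mul a b _ _ iha ihb =>
    rw [map_mul, Equiv.Perm.mul_apply, ← iha, ← ihb]
    group
  | inv a _ iha =>
    have hy := iha (envelAction a⁻¹ x)
    rw [map_inv, ← Equiv.Perm.mul_apply, mul_inv_cancel, Equiv.Perm.one_apply] at hy
    rw [map_inv, ← hy]
    group

theorem ker_envelAction_le_center :
    (envelAction (R := R)).ker ≤ Subgroup.center (EnvelGroup R) := by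
  intro z hz
  have hconj : (MulAut.conj z).toMonoidHom = MonoidHom.id (EnvelGroup R) :=
    hom_ext_s17 fun x => by simp [mul_toEnvelGroup_mul_inv, MonoidHom.mem_ker.mp hz]
  refine Subgroup.mem_center_iff.mpr fun g => ?_
  have hg : z * g * z⁻¹ = g := DFunLike.congr_fun hconj g
  rw [mul_inv_eq_iff_eq_mul] at hg
  exact hg.symm

def toFreeAbelianOrbits : EnvelGroup R →* Multiplicative (FreeAbelianGroup (Orbits R)) :=
  toEnvelGroup.map
    { toFun := fun x => Multiplicative.ofAdd (FreeAbelianGroup.of (Quot.mk _ x))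
      map_act' := fun {x y} => by
        rw [Orbits.mk_act, Quandle.conj_act_eq_conj, mul_comm, inv_mul_cancel_left] }

theorem exists_comp_toFreeAbelianOrbits {A : Type*} [CommGroup A] (φ : EnvelGroup R →* A) :
    ∃ ψ : Multiplicative (FreeAbelianGroup (Orbits R)) →* A, ψ.comp toFreeAbelianOrbits = φ := by
  let χ : Orbits R → A := Quot.lift (fun x => φ (toEnvelGroup R x)) (by
    rintro a _ ⟨x, rfl⟩
    rw [toEnvelGroup_act, map_mul, map_mul, map_inv, mul_comm, inv_mul_cancel_left])
  refine ⟨AddMonoidHom.toMultiplicativeLeft (FreeAbelianGroup.lift fun o => Additive.ofMul (χ o)),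
    hom_ext_s17 fun x => ?_⟩
  exact congrArg Additive.toMul
    (FreeAbelianGroup.lift_apply_of (fun o => Additive.ofMul (χ o)) (Quot.mk _ x : Orbits R))

theorem map_eq_one_of_isOfFinOrder {A : Type*} [CommGroup A] (φ : EnvelGroup R →* A)
    {z : EnvelGroup R} (hz : IsOfFinOrder z) : φ z = 1 := by
  obtain ⟨ψ, rfl⟩ := exists_comp_toFreeAbelianOrbits φ
  rw [MonoidHom.comp_apply, (toFreeAbelianOrbits.isOfFinOrder hz).eq_one', map_one]

end EnvelGroup

end Rack

section Quandle

variable (Q : Type*) [Rack Q]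

theorem subtype_comp_qdlThetaG : (QdlInn Q).subtype.comp (QdlThetaG Q) = Rack.envelAction :=
  Rack.EnvelGroup.hom_ext_s17 fun _ => rfl

theorem qdlZ0_le_center : QdlZ0 Q ≤ Subgroup.center (Rack.EnvelGroup Q) := fun z hz =>
  Rack.EnvelGroup.ker_envelAction_le_center <| by
    rw [MonoidHom.mem_ker, ← subtype_comp_qdlThetaG, MonoidHom.comp_apply, MonoidHom.mem_ker.mp hz,
      map_one]

theorem qdlThetaG_surjective : Function.Surjective (QdlThetaG Q) := by
  rintro ⟨u, hu⟩
  have hu' : u ∈ (Rack.envelAction (R := Q)).range := by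
    rw [← subtype_comp_qdlThetaG, MonoidHom.range_eq_map,
      ← Rack.EnvelGroup.closure_range_toEnvelGroup, MonoidHom.map_closure, ← Set.range_comp]
    exact hu
  obtain ⟨g, hg⟩ := hu'
  exact ⟨g, Subtype.ext ((DFunLike.congr_fun (subtype_comp_qdlThetaG Q) g).trans hg)⟩

end Quandle

theorem stmt17_general (Q : Type*) [Quandle Q]
    (hschur : ∀ α : QdlInn Q → QdlInn Q → ℂˣ,
      (∀ g h k : QdlInn Q, α g h * α (g * h) k = α h k * α g (h * k)) →
      ∃ β : QdlInn Q → ℂˣ, ∀ g h : QdlInn Q, α g h = β g * β h * (β (g * h))⁻¹) :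
    ∀ z ∈ QdlZ0 Q, IsOfFinOrder z → z = 1 := by
  intro z hz hord
  by_contra hne
  let := Subgroup.commGroupOfLeCenter (qdlZ0_le_center Q)
  obtain ⟨χ, hχ⟩ := exists_monoidHom_units_complex_apply_ne_one (a := (⟨z, hz⟩ : QdlZ0 Q))
    fun h => hne (congrArg Subtype.val h)
  obtain ⟨φ, hφ⟩ := (QdlThetaG Q).exists_extension_of_ker_le_center (qdlThetaG_surjective Q)
    (qdlZ0_le_center Q) hschur χ
  exact hχ (hφ ⟨z, hz⟩ ▸ Rack.EnvelGroup.map_eq_one_of_isOfFinOrder φ hord)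

/-- if every `ℂˣ`-valued 2-cocycle on `Inn(Q)` is a 2-coboundary (`Q` finite),
then `Z₀ = ker θ_{G(Q)}` is torsion-free. -/
theorem stmt17 (Q : Type*) [Quandle Q] [Finite Q]
    (hschur : ∀ α : QdlInn Q → QdlInn Q → ℂˣ,
      (∀ g h k : QdlInn Q, α g h * α (g * h) k = α h k * α g (h * k)) →
      ∃ β : QdlInn Q → ℂˣ, ∀ g h : QdlInn Q, α g h = β g * β h * (β (g * h))⁻¹) :
    ∀ z ∈ QdlZ0 Q, IsOfFinOrder z → z = 1 :=
  stmt17_general Q hschur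
end
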